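/- Let $d_1,d_2 > 0$ and $a_{11},a_{12},a_{21},a_{22} > 0$ satisfy $a_{12}^2 < 8a_{11}a_{21}$ and $a_{21}^2 < 8a_{22}a_{12}$. Then there exists $\alpha > 0$ such that for all $u,v \ge 0$ and all $\xi=(\xi_1,\xi_2)\in\mathbb{R}^2$, the matrix $P(u,v) = \begin{pmatrix} d_1+2a_{11}u+a_{12}v & a_{12}u \\ a_{21}v & d_2+a_{21}u+2a_{22}v \end{pmatrix}$ satisfies $(P(u,v)\xi)\cdot\xi \ge \alpha(u+v)|\xi|^2 + d_0|\xi|^2$, where $d_0 = \min(d_1,d_2)$. -/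

import Mathlib

/-!
The quadratic form of `P(u, v)` splits as `d₁ξ₁² + d₂ξ₂² + u Q₁(ξ) + v Q₂(ξ)` with the binary forms
`Q₁ = 2a₁₁ξ₁² + a₁₂ξ₁ξ₂ + a₂₁ξ₂²` and `Q₂ = a₁₂ξ₁² + a₂₁ξ₁ξ₂ + 2a₂₂ξ₂²`. The two hypotheses on the
coefficients say exactly that `Q₁` and `Q₂` have negative discriminant, so both are positive
definite and hence bounded below by a multiple of `|ξ|²`; the smaller of the two constants is `α`.
-/

theorem dotProduct_mulVec_self_fin_two (p q r s : ℝ) (ξ : Fin 2 → ℝ) :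
    dotProduct (!![p, q; r, s].mulVec ξ) ξ = p * ξ 0 ^ 2 + (q + r) * ξ 0 * ξ 1 + s * ξ 1 ^ 2 := by
  simp only [dotProduct, Matrix.mulVec, Fin.sum_univ_two, Matrix.cons_val_zero,
    Matrix.cons_val_one, Matrix.of_apply, Matrix.cons_val', Matrix.empty_val']
  ring

theorem binary_form_nonneg {a b c : ℝ} (ha : 0 < a) (hdisc : b ^ 2 ≤ 4 * a * c) (x y : ℝ) :
    0 ≤ a * x ^ 2 + b * x * y + c * y ^ 2 := by
  have hsq : 4 * a * (a * x ^ 2 + b * x * y + c * y ^ 2)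
      = (2 * a * x + b * y) ^ 2 + (4 * a * c - b ^ 2) * y ^ 2 := by ring
  have hdisc' : 0 ≤ 4 * a * c - b ^ 2 := by linarith
  rw [← mul_nonneg_iff_of_pos_left (by positivity : (0 : ℝ) < 4 * a), hsq]
  positivity

-- With `α = (4ac - b²) / (4(a + c))` one has `4(a - α)(c - α) = b² + 4α²`.
theorem exists_pos_binary_form_coercive {a b c : ℝ} (ha : 0 < a) (hdisc : b ^ 2 < 4 * a * c) :
    ∃ α > 0, ∀ x y : ℝ, α * (x ^ 2 + y ^ 2) ≤ a * x ^ 2 + b * x * y + c * y ^ 2 := by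
  have hc : 0 < c := by nlinarith [sq_nonneg b]
  set α := (4 * a * c - b ^ 2) / (4 * (a + c)) with hα
  have hα_pos : 0 < α := by apply div_pos <;> linarith
  have hα_mul : 4 * (a + c) * α = 4 * a * c - b ^ 2 := by rw [hα]; field_simp
  refine ⟨α, hα_pos, fun x y => ?_⟩
  have ha' : 0 < a - α := by nlinarith
  have hdisc' : b ^ 2 ≤ 4 * (a - α) * (c - α) := by nlinarith [sq_nonneg α]
  have hshift := binary_form_nonneg ha' hdisc' x y
  linarith

theorem skt_P_coercive_general (d1 d2 a11 a12 a21 a22 : ℝ)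
    (h11 : 0 < a11) (h12 : 0 < a12)
    (h1 : a12 ^ 2 < 8 * a11 * a21) (h2 : a21 ^ 2 < 8 * a22 * a12) :
    ∃ α > (0:ℝ), ∀ u v : ℝ, 0 ≤ u → 0 ≤ v → ∀ ξ : Fin 2 → ℝ,
      dotProduct
        ((!![d1 + 2*a11*u + a12*v, a12*u; a21*v, d2 + a21*u + 2*a22*v]).mulVec ξ) ξ ≥
        α * (u + v) * (ξ 0 ^ 2 + ξ 1 ^ 2) + min d1 d2 * (ξ 0 ^ 2 + ξ 1 ^ 2) := by
  obtain ⟨αu, hαu, hu_form⟩ := exists_pos_binary_form_coercive (a := 2 * a11) (b := a12)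
    (c := a21) (by positivity) (by linarith)
  obtain ⟨αv, hαv, hv_form⟩ := exists_pos_binary_form_coercive (a := a12) (b := a21)
    (c := 2 * a22) h12 (by linarith)
  refine ⟨min αu αv, lt_min hαu hαv, fun u v hu hv ξ => ?_⟩
  rw [ge_iff_le, dotProduct_mulVec_self_fin_two]
  set x := ξ 0
  set y := ξ 1
  have hsplit : (d1 + 2 * a11 * u + a12 * v) * x ^ 2 + (a12 * u + a21 * v) * x * y
      + (d2 + a21 * u + 2 * a22 * v) * y ^ 2
      = (d1 * x ^ 2 + d2 * y ^ 2) + u * (2 * a11 * x ^ 2 + a12 * x * y + a21 * y ^ 2)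
        + v * (a12 * x ^ 2 + a21 * x * y + 2 * a22 * y ^ 2) := by ring
  have hd : min d1 d2 * (x ^ 2 + y ^ 2) ≤ d1 * x ^ 2 + d2 * y ^ 2 := by
    nlinarith [min_le_left d1 d2, min_le_right d1 d2, sq_nonneg x, sq_nonneg y]
  have hα : min αu αv * (u + v) * (x ^ 2 + y ^ 2)
      ≤ u * (αu * (x ^ 2 + y ^ 2)) + v * (αv * (x ^ 2 + y ^ 2)) := by
    nlinarith [mul_nonneg hu (add_nonneg (sq_nonneg x) (sq_nonneg y)),
      mul_nonneg hv (add_nonneg (sq_nonneg x) (sq_nonneg y)),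
      min_le_left αu αv, min_le_right αu αv]
  rw [hsplit]
  linarith [hd, hα, mul_le_mul_of_nonneg_left (hu_form x y) hu,
    mul_le_mul_of_nonneg_left (hv_form x y) hv]

theorem skt_P_coercive (d1 d2 a11 a12 a21 a22 : ℝ)
    (hd1 : 0 < d1) (hd2 : 0 < d2)
    (h11 : 0 < a11) (h12 : 0 < a12) (h21 : 0 < a21) (h22 : 0 < a22)
    (h1 : a12 ^ 2 < 8 * a11 * a21) (h2 : a21 ^ 2 < 8 * a22 * a12) :
    ∃ α > (0:ℝ), ∀ u v : ℝ, 0 ≤ u → 0 ≤ v → ∀ ξ : Fin 2 → ℝ,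
      dotProduct
        ((!![d1 + 2*a11*u + a12*v, a12*u; a21*v, d2 + a21*u + 2*a22*v]).mulVec ξ) ξ ≥
        α * (u + v) * (ξ 0 ^ 2 + ξ 1 ^ 2) + min d1 d2 * (ξ 0 ^ 2 + ξ 1 ^ 2) :=
  skt_P_coercive_general d1 d2 a11 a12 a21 a22 h11 h12 h1 h2
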